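/- arXiv:1705.01639 — 4 statements merged into one kernel-verified Lean document; each statement's English description precedes it below -/
import Mathlib

section
/- Let R be a commutative ring in which 2 is invertible, let M be an R-module, let ω : M × M → R be an alternating R-bilinear form, and let ξ₁, ξ₂ be ω-skew R-linear endomorphisms of M. For s, u₁, u₂ ∈ M set ṡᵢ := uᵢ − ξᵢ(s) for i = 1, 2. Then ω(u₁, u₂) = ω(ṡ₁, ṡ₂) + ω(ṡ₁, ξ₂ s) − ω(ṡ₂, ξ₁ s) + (1/2)·ω((ξ₁∘ξ₂ − ξ₂∘ξ₁)(s), s). -/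
/-- The algebraic core of equation (2) of the paper: with `sdotᵢ = uᵢ − ξᵢ(s)`,
`ω(u₁, u₂) = ω(sdot₁, sdot₂) + ω(sdot₁, ξ₂ s) − ω(sdot₂, ξ₁ s) + (1/2)·ω([ξ₁, ξ₂]s, s)`. -/
theorem symplectic_pairing_local_decomposition
    {R M : Type*} [CommRing R] [Invertible (2 : R)]
    [AddCommGroup M] [Module R M]
    (ω : M →ₗ[R] M →ₗ[R] R) (hω : ∀ u : M, ω u u = 0)
    (ξ₁ ξ₂ : M →ₗ[R] M)
    (h₁ : ∀ u v : M, ω (ξ₁ u) v = - ω u (ξ₁ v))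
    (h₂ : ∀ u v : M, ω (ξ₂ u) v = - ω u (ξ₂ v))
    (s u₁ u₂ sdot₁ sdot₂ : M)
    (hsdot₁ : sdot₁ = u₁ - ξ₁ s) (hsdot₂ : sdot₂ = u₂ - ξ₂ s) :
    ω u₁ u₂ = ω sdot₁ sdot₂ + ω sdot₁ (ξ₂ s) - ω sdot₂ (ξ₁ s)
      + ⅟(2 : R) * ω ((ξ₁ ∘ₗ ξ₂ - ξ₂ ∘ₗ ξ₁) s) s := by
  have skew : ∀ u v : M, ω u v = - ω v u := by
    intro u v
    have h := hω (u + v)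
    simp only [map_add, LinearMap.add_apply, hω] at h
    linear_combination h
  have h2inv : (⅟(2 : R)) * 2 = 1 := invOf_mul_self 2
  subst hsdot₁ hsdot₂
  have key : ω ((ξ₁ ∘ₗ ξ₂ - ξ₂ ∘ₗ ξ₁) s) s = 2 * ω (ξ₁ s) (ξ₂ s) := by
    simp only [LinearMap.sub_apply, LinearMap.comp_apply, map_sub,
      LinearMap.sub_apply, h₁ (ξ₂ s) s, h₂ (ξ₁ s) s]
    linear_combination (-1 : R) * skew (ξ₂ s) (ξ₁ s)
  rw [key]
  simp only [map_sub, LinearMap.sub_apply]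
  linear_combination skew (ξ₁ s) u₂ + (-1 : R) * skew (ξ₂ s) (ξ₁ s)
    + ω (ξ₁ s) (ξ₂ s) * h2inv
    - 2 * ω (ξ₁ s) (ξ₂ s) * h2inv
end

section
/- Let R be a commutative ring in which 2 is invertible, let M be an R-module, let ω : M × M → R be an alternating R-bilinear form, let g be an R-linear automorphism of M satisfying ω(g u, g v) = ω(u, v) for all u, v ∈ M, let T be an invertible element of R, and let ξ₁, ξ₂ be ω-skew R-linear endomorphisms of M. Given s°, ṡ₁°, ṡ₂° ∈ M, set s' := T⁻¹·g⁻¹(s°) and ṡ'ᵢ := T⁻¹·g⁻¹(ṡᵢ°) − ξᵢ(s') for i = 1, 2. Then T⁻²·ω(g⁻¹ṡ₁°, g⁻¹ṡ₂°) = ω(ṡ'₁, ṡ'₂) + ω(ṡ'₁, ξ₂ s') − ω(ṡ'₂, ξ₁ s') + (1/2)·ω((ξ₁∘ξ₂ − ξ₂∘ξ₁)(s'), s'). -/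
/-- Equation (2) of the paper: with `s' = T⁻¹·g⁻¹(s°)` and
`sdot'ᵢ = T⁻¹·g⁻¹(sdotᵢ°) − ξᵢ(s')`, one has
`T⁻²·ω(g⁻¹sdot₁°, g⁻¹sdot₂°) = ω(sdot'₁, sdot'₂) + ω(sdot'₁, ξ₂ s') − ω(sdot'₂, ξ₁ s')
  + (1/2)·ω([ξ₁, ξ₂]s', s')`. -/
theorem gluing_symplectic_pairing_identity
    {R M : Type*} [CommRing R] [Invertible (2 : R)]
    [AddCommGroup M] [Module R M]
    (ω : M →ₗ[R] M →ₗ[R] R) (hω : ∀ u : M, ω u u = 0)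
    (g : M ≃ₗ[R] M) (hg : ∀ u v : M, ω (g u) (g v) = ω u v)
    (T : Rˣ)
    (ξ₁ ξ₂ : M →ₗ[R] M)
    (h₁ : ∀ u v : M, ω (ξ₁ u) v = - ω u (ξ₁ v))
    (h₂ : ∀ u v : M, ω (ξ₂ u) v = - ω u (ξ₂ v))
    (s₀ sdot₀₁ sdot₀₂ s' sdot'₁ sdot'₂ : M)
    (hs' : s' = (↑T⁻¹ : R) • g.symm s₀)
    (hsdot'₁ : sdot'₁ = (↑T⁻¹ : R) • g.symm sdot₀₁ - ξ₁ s')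
    (hsdot'₂ : sdot'₂ = (↑T⁻¹ : R) • g.symm sdot₀₂ - ξ₂ s') :
    (↑T⁻¹ : R) ^ 2 * ω (g.symm sdot₀₁) (g.symm sdot₀₂)
      = ω sdot'₁ sdot'₂ + ω sdot'₁ (ξ₂ s') - ω sdot'₂ (ξ₁ s')
        + ⅟(2 : R) * ω ((ξ₁ ∘ₗ ξ₂ - ξ₂ ∘ₗ ξ₁) s') s' := by
  have hanti : ∀ u v : M, ω u v = - ω v u := by
    intro u v
    have h := hω (u + v)
    simp only [map_add, LinearMap.add_apply, hω] at h
    linear_combination h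
  subst hsdot'₁ hsdot'₂
  simp only [map_sub, map_smul, LinearMap.sub_apply, LinearMap.comp_apply,
    LinearMap.smul_apply, smul_eq_mul]
  have e1 := hanti (g.symm sdot₀₂) (ξ₁ s')
  have e2 := h₁ (ξ₂ s') s'
  have e3 := h₂ (ξ₁ s') s'
  have e4 := hanti (ξ₂ s') (ξ₁ s')
  have h2 : (⅟(2:R)) * 2 = 1 := invOf_mul_self 2
  linear_combination (↑T⁻¹ : R) * e1 - ⅟(2:R) * e2 + ⅟(2:R) * e3 - ⅟(2:R) * e4
    + (ω (ξ₂ s') (ξ₁ s')) * h2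
end

section
/- Let V be a finite-dimensional complex vector space with an alternating bilinear form ω, let K = ℂ((t)) be the field of formal Laurent series, let V_K := K ⊗_ℂ V, and let ω_K be the K-bilinear extension of ω to V_K. Let g be a K-linear automorphism of V_K with ω_K(g u, g v) = ω_K(u, v) for all u, v, let T ∈ K be nonzero, and let ξ₁, ξ₂ be ω_K-skew K-linear endomorphisms of V_K. Given u₁, u₂, s' ∈ V_K, set ṡ'ᵢ := T⁻¹·g⁻¹(uᵢ) − ξᵢ(s') for i = 1, 2, and assume that s', ṡ'₁, ṡ'₂ all lie in ℂ[[t]] ⊗_ℂ V (i.e., all their Laurent coefficients in negative degrees vanish). Then the coefficient of t⁻¹ in ω_K(ṡ'₁, ξ₂ s') − ω_K(ṡ'₂, ξ₁ s') + (1/2)·ω_K((ξ₁∘ξ₂ − ξ₂∘ξ₁)(s'), s') equals the coefficient of t⁻¹ in T⁻²·ω_K(g⁻¹u₁, g⁻¹u₂). -/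
open scoped TensorProduct

noncomputable section

set_option synthInstance.maxHeartbeats 1000000
set_option maxHeartbeats 1000000

instance : SMulCommClass ℂ (LaurentSeries ℂ) (LaurentSeries ℂ) :=
  ⟨fun c x y => by
    rw [smul_eq_mul, smul_eq_mul, ← HahnSeries.single_zero_mul_eq_smul,
      ← HahnSeries.single_zero_mul_eq_smul, mul_left_comm]⟩

/-- The `n`-th Laurent coefficient, as a `ℂ`-linear map. -/
def coeffL (n : ℤ) : LaurentSeries ℂ →ₗ[ℂ] ℂ where
  toFun f := f.coeff n
  map_add' f g := by simp
  map_smul' c f := by simp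

lemma mul_coeff_neg {f g : LaurentSeries ℂ}
    (hf : ∀ n : ℤ, n < 0 → f.coeff n = 0) (hg : ∀ n : ℤ, n < 0 → g.coeff n = 0)
    {n : ℤ} (hn : n < 0) : (f * g).coeff n = 0 := by
  rw [HahnSeries.coeff_mul]
  refine Finset.sum_eq_zero fun ij hij => ?_
  rw [Finset.mem_addAntidiagonal] at hij
  rcases lt_or_ge ij.1 0 with h | h
  · rw [hf _ h, zero_mul]
  · have h2 : ij.2 < 0 := by omega
    rw [hg _ h2, mul_zero]

lemma omegaK_coeff_neg {V : Type*} [AddCommGroup V] [Module ℂ V] [FiniteDimensional ℂ V]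
    (ω : V →ₗ[ℂ] V →ₗ[ℂ] ℂ)
    (ωK : (LaurentSeries ℂ ⊗[ℂ] V) →ₗ[LaurentSeries ℂ]
      (LaurentSeries ℂ ⊗[ℂ] V) →ₗ[LaurentSeries ℂ] LaurentSeries ℂ)
    (hωK : ∀ (p q : LaurentSeries ℂ) (u v : V),
      ωK (p ⊗ₜ[ℂ] u) (q ⊗ₜ[ℂ] v) = p * q * algebraMap ℂ (LaurentSeries ℂ) (ω u v))
    (x y : LaurentSeries ℂ ⊗[ℂ] V)
    (hx : ∀ n : ℤ, n < 0 → (coeffL n).rTensor V x = 0)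
    (hy : ∀ n : ℤ, n < 0 → (coeffL n).rTensor V y = 0)
    {n : ℤ} (hn : n < 0) : (ωK x y).coeff n = 0 := by
  classical
  set b := Module.finBasis ℂ V with hb
  set Φ : Fin (Module.finrank ℂ V) → (LaurentSeries ℂ ⊗[ℂ] V →ₗ[ℂ] LaurentSeries ℂ) :=
    fun i => (TensorProduct.rid ℂ (LaurentSeries ℂ)).toLinearMap ∘ₗ
      LinearMap.lTensor (LaurentSeries ℂ) (b.coord i) with hΦ
  have hrep : ∀ z : LaurentSeries ℂ ⊗[ℂ] V, z = ∑ i, (Φ i z) ⊗ₜ[ℂ] b i := by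
    intro z
    induction z using TensorProduct.induction_on with
    | zero => simp
    | tmul p v =>
      simp only [hΦ, LinearMap.comp_apply, LinearMap.lTensor_tmul, LinearEquiv.coe_coe,
        TensorProduct.rid_tmul, Module.Basis.coord_apply]
      calc p ⊗ₜ[ℂ] v = p ⊗ₜ[ℂ] ∑ i, b.repr v i • b i := by rw [b.sum_repr]
        _ = ∑ i, p ⊗ₜ[ℂ] (b.repr v i • b i) := by rw [TensorProduct.tmul_sum]
        _ = ∑ i, (b.repr v i • p) ⊗ₜ[ℂ] b i := by
            simp only [TensorProduct.tmul_smul, TensorProduct.smul_tmul']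
    | add z1 z2 ih1 ih2 =>
      simp only [map_add, TensorProduct.add_tmul, Finset.sum_add_distrib, ← ih1, ← ih2]
  have hB : ∀ (z : LaurentSeries ℂ ⊗[ℂ] V) (i) (m : ℤ), (Φ i z).coeff m
      = b.coord i ((TensorProduct.lid ℂ V) ((coeffL m).rTensor V z)) := by
    intro z i m
    induction z using TensorProduct.induction_on with
    | zero => simp
    | tmul p v =>
      simp only [hΦ, LinearMap.comp_apply, LinearMap.lTensor_tmul, LinearEquiv.coe_coe,
        TensorProduct.rid_tmul, LinearMap.rTensor_tmul, TensorProduct.lid_tmul, map_smul,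
        Module.Basis.coord_apply, HahnSeries.coeff_smul, smul_eq_mul]
      exact mul_comm _ _
    | add z1 z2 ih1 ih2 =>
      simp only [map_add, HahnSeries.coeff_add, ih1, ih2]
  have hcoeff : ∀ z : LaurentSeries ℂ ⊗[ℂ] V,
      (∀ m : ℤ, m < 0 → (coeffL m).rTensor V z = 0) →
      ∀ i, ∀ m : ℤ, m < 0 → (Φ i z).coeff m = 0 := by
    intro z hz i m hm
    rw [hB, hz m hm, map_zero, map_zero]
  obtain ⟨px, hpx⟩ : ∃ px, px = fun i => (Φ i) x := ⟨_, rfl⟩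
  obtain ⟨qy, hqy⟩ : ∃ qy, qy = fun j => (Φ j) y := ⟨_, rfl⟩
  have hx' : x = ∑ i, px i ⊗ₜ[ℂ] b i := by rw [hpx]; exact hrep x
  have hy' : y = ∑ j, qy j ⊗ₜ[ℂ] b j := by rw [hqy]; exact hrep y
  have hxy : ωK x y = ∑ i, ∑ j,
      (px i) * (qy j) * algebraMap ℂ (LaurentSeries ℂ) (ω (b i) (b j)) := by
    rw [hx', hy']
    simp only [map_sum, LinearMap.sum_apply, hωK]
    exact Finset.sum_comm
  rw [hxy]
  show (coeffL n) _ = 0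
  rw [map_sum]
  refine Finset.sum_eq_zero fun i _ => ?_
  rw [map_sum]
  refine Finset.sum_eq_zero fun j _ => ?_
  show ((px i) * (qy j) * algebraMap ℂ (LaurentSeries ℂ) (ω (b i) (b j))).coeff n = 0
  rw [mul_assoc]
  refine mul_coeff_neg (by rw [hpx]; exact hcoeff x hx i)
    (fun m hm => mul_coeff_neg (by rw [hqy]; exact hcoeff y hy j) (fun k hk => ?_) hm) hn
  rw [HahnSeries.algebraMap_apply',
    show (algebraMap ℂ (PowerSeries ℂ)) (ω (b i) (b j)) = PowerSeries.C _ from rfl,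
    HahnSeries.ofPowerSeries_C, HahnSeries.C_apply,
    HahnSeries.coeff_single_of_ne (by omega : k ≠ (0:ℤ))]

lemma omegaK_skew {V : Type*} [AddCommGroup V] [Module ℂ V]
    (ω : V →ₗ[ℂ] V →ₗ[ℂ] ℂ) (hω : ∀ u : V, ω u u = 0)
    (ωK : (LaurentSeries ℂ ⊗[ℂ] V) →ₗ[LaurentSeries ℂ]
      (LaurentSeries ℂ ⊗[ℂ] V) →ₗ[LaurentSeries ℂ] LaurentSeries ℂ)
    (hωK : ∀ (p q : LaurentSeries ℂ) (u v : V),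
      ωK (p ⊗ₜ[ℂ] u) (q ⊗ₜ[ℂ] v) = p * q * algebraMap ℂ (LaurentSeries ℂ) (ω u v))
    (x y : LaurentSeries ℂ ⊗[ℂ] V) : ωK x y = - ωK y x := by
  have hω' : ∀ u v : V, ω u v = - ω v u := by
    intro u v
    have h := hω (u + v)
    simp only [map_add, LinearMap.add_apply, hω u, hω v] at h
    linear_combination h
  induction x using TensorProduct.induction_on with
  | zero => simp
  | tmul p u =>
    induction y using TensorProduct.induction_on with
    | zero => simp
    | tmul q v => rw [hωK, hωK, hω' u v, map_neg]; ring
    | add y1 y2 ih1 ih2 =>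
      simp only [map_add, LinearMap.add_apply, ih1, ih2]; ring
  | add x1 x2 ih1 ih2 =>
    simp only [map_add, LinearMap.add_apply, ih1, ih2]; ring

/-- Single-point residue identity (Section 2.5 of the paper): if `s'`, `ṡ'₁ = T⁻¹g⁻¹u₁ − ξ₁s'`
and `ṡ'₂ = T⁻¹g⁻¹u₂ − ξ₂s'` are power series (no negative Laurent coefficients), then the residue
of `ω_K(ṡ'₁, ξ₂s') − ω_K(ṡ'₂, ξ₁s') + (1/2)ω_K((ξ₁∘ξ₂ − ξ₂∘ξ₁)s', s')` equals the residue of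
`T⁻²·ω_K(g⁻¹u₁, g⁻¹u₂)`. -/
theorem single_point_residue_identity
    {V : Type*} [AddCommGroup V] [Module ℂ V] [FiniteDimensional ℂ V]
    (ω : V →ₗ[ℂ] V →ₗ[ℂ] ℂ) (hω : ∀ u : V, ω u u = 0)
    -- `ωK` is the `K`-bilinear extension of `ω` to `V_K = K ⊗[ℂ] V`, where `K = ℂ((t))`:
    (ωK : (LaurentSeries ℂ ⊗[ℂ] V) →ₗ[LaurentSeries ℂ]
      (LaurentSeries ℂ ⊗[ℂ] V) →ₗ[LaurentSeries ℂ] LaurentSeries ℂ)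
    (hωK : ∀ (p q : LaurentSeries ℂ) (u v : V),
      ωK (p ⊗ₜ[ℂ] u) (q ⊗ₜ[ℂ] v) = p * q * algebraMap ℂ (LaurentSeries ℂ) (ω u v))
    (g : (LaurentSeries ℂ ⊗[ℂ] V) ≃ₗ[LaurentSeries ℂ] (LaurentSeries ℂ ⊗[ℂ] V))
    (hg : ∀ u v : LaurentSeries ℂ ⊗[ℂ] V, ωK (g u) (g v) = ωK u v)
    (T : LaurentSeries ℂ) (hT : T ≠ 0)
    (ξ₁ ξ₂ : (LaurentSeries ℂ ⊗[ℂ] V) →ₗ[LaurentSeries ℂ] (LaurentSeries ℂ ⊗[ℂ] V))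
    (h₁ : ∀ u v : LaurentSeries ℂ ⊗[ℂ] V, ωK (ξ₁ u) v = - ωK u (ξ₁ v))
    (h₂ : ∀ u v : LaurentSeries ℂ ⊗[ℂ] V, ωK (ξ₂ u) v = - ωK u (ξ₂ v))
    -- `ξbrk` is the commutator `ξ₁ ∘ ξ₂ − ξ₂ ∘ ξ₁`:
    (ξbrk : (LaurentSeries ℂ ⊗[ℂ] V) →ₗ[LaurentSeries ℂ] (LaurentSeries ℂ ⊗[ℂ] V))
    (hξbrk : ∀ w : LaurentSeries ℂ ⊗[ℂ] V, ξbrk w = ξ₁ (ξ₂ w) - ξ₂ (ξ₁ w))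
    (u₁ u₂ s' sdot'₁ sdot'₂ : LaurentSeries ℂ ⊗[ℂ] V)
    (hsdot'₁ : sdot'₁ = T⁻¹ • g.symm u₁ - ξ₁ s')
    (hsdot'₂ : sdot'₂ = T⁻¹ • g.symm u₂ - ξ₂ s')
    -- `s'`, `ṡ'₁`, `ṡ'₂` lie in `ℂ[[t]] ⊗ V`, i.e. their negative Laurent coefficients vanish:
    (hreg : ∀ n : ℤ, n < 0 →
      (coeffL n).rTensor V s' = 0 ∧ (coeffL n).rTensor V sdot'₁ = 0 ∧
        (coeffL n).rTensor V sdot'₂ = 0) :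
    (ωK sdot'₁ (ξ₂ s') - ωK sdot'₂ (ξ₁ s')
        + (1 / 2 : LaurentSeries ℂ) * ωK (ξbrk s') s').coeff (-1)
      = (T⁻¹ ^ 2 * ωK (g.symm u₁) (g.symm u₂)).coeff (-1) := by
  have skew := omegaK_skew ω hω ωK hωK
  have hres : (ωK sdot'₁ sdot'₂).coeff (-1) = 0 :=
    omegaK_coeff_neg ω ωK hωK _ _ (fun n hn => (hreg n hn).2.1) (fun n hn => (hreg n hn).2.2)
      (by norm_num)
  have key : ωK sdot'₁ (ξ₂ s') - ωK sdot'₂ (ξ₁ s')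
      + (1 / 2 : LaurentSeries ℂ) * ωK (ξbrk s') s'
      = T⁻¹ ^ 2 * ωK (g.symm u₁) (g.symm u₂) - ωK sdot'₁ sdot'₂ := by
    simp only [hsdot'₁, hsdot'₂, hξbrk, map_sub, LinearMap.sub_apply, map_smul,
      LinearMap.smul_apply, smul_eq_mul]
    rw [h₁ (ξ₂ s') s', h₂ (ξ₁ s') s', skew (ξ₂ s') (ξ₁ s'), skew (ξ₁ s') (g.symm u₂)]
    have htwo : (2 : LaurentSeries ℂ) ≠ 0 := by
      intro h
      have := congrArg (fun f : LaurentSeries ℂ => f.coeff 0) h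
      rw [show (2:LaurentSeries ℂ) = 1 + 1 by norm_num] at this
      simp [HahnSeries.coeff_one] at this
    have h2 : ((ωK (ξ₁ s')) (ξ₂ s')) * 2⁻¹ * 2 = (ωK (ξ₁ s')) (ξ₂ s') := by
      rw [mul_assoc, inv_mul_cancel₀ htwo, mul_one]
    ring_nf
    rw [h2]
    ring
  rw [key, HahnSeries.coeff_sub, hres, sub_zero]
end
end

section
/- Let p, q ∈ ℂ[z] be polynomials with q ≠ 0 and deg p + 2 ≤ deg q, and let f = p/q ∈ ℂ(z). Then the finitely supported sum over a ∈ ℂ of res_a(f) equals 0, where res_a(f) is the coefficient of t⁻¹ in the Laurent expansion of f at a. -/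
noncomputable section

open Polynomial

/-- The Laurent expansion of a rational function `f` at `a ∈ ℂ`: substitute `z = a + t`
and expand as a formal Laurent series in `t`. -/
def laurentExpansion (a : ℂ) (f : RatFunc ℂ) : LaurentSeries ℂ :=
  ((RatFunc.laurent a f : RatFunc ℂ) : LaurentSeries ℂ)

/-- The residue of the rational `1`-form `f dz` at `a ∈ ℂ`: the coefficient of `t⁻¹`
in the Laurent expansion of `f` at `a`. -/
def res (a : ℂ) (f : RatFunc ℂ) : ℂ :=
  (laurentExpansion a f).coeff (-1)

lemma coe_poly_eq (u : Polynomial ℂ) :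
    ((algebraMap (Polynomial ℂ) (RatFunc ℂ) u : RatFunc ℂ) : LaurentSeries ℂ)
      = ((u : PowerSeries ℂ) : LaurentSeries ℂ) :=
  (RatFunc.coe_coe u).symm

lemma coeff_neg_one_of_unit_denom (u w : Polynomial ℂ) (hw : w.coeff 0 ≠ 0) :
    ((algebraMap (Polynomial ℂ) (RatFunc ℂ) u / algebraMap (Polynomial ℂ) (RatFunc ℂ) w :
      RatFunc ℂ) : LaurentSeries ℂ).coeff (-1) = 0 := by
  have hw0 : w ≠ 0 := fun h => hw (by simp [h])
  have hunit : IsUnit (w : PowerSeries ℂ) := by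
    rw [PowerSeries.isUnit_iff_constantCoeff]
    rw [← PowerSeries.coeff_zero_eq_constantCoeff_apply, Polynomial.coeff_coe]
    exact isUnit_iff_ne_zero.mpr hw
  obtain ⟨v, hv⟩ := hunit.exists_right_inv
  have hwne : ((w : PowerSeries ℂ) : LaurentSeries ℂ) ≠ 0 := by
    intro h
    have h2 : (w : PowerSeries ℂ) = 0 :=
      HahnSeries.ofPowerSeries_injective (Γ := ℤ) (by rw [map_zero]; exact h)
    exact hw0 (by simpa [Polynomial.coe_eq_zero_iff] using h2)
  have key : ((algebraMap (Polynomial ℂ) (RatFunc ℂ) u / algebraMap (Polynomial ℂ) (RatFunc ℂ) w :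
      RatFunc ℂ) : LaurentSeries ℂ)
      = (((u : PowerSeries ℂ) * v : PowerSeries ℂ) : LaurentSeries ℂ) := by
    rw [map_div₀, coe_poly_eq, coe_poly_eq, div_eq_iff hwne, ← PowerSeries.coe_mul,
      mul_assoc, mul_comm v, hv, mul_one]
  rw [key, PowerSeries.coeff_coe, if_pos (by norm_num)]

lemma coeff_neg_one_div_X_pow (u : Polynomial ℂ) (m : ℕ) (hm : 1 ≤ m) :
    ((algebraMap (Polynomial ℂ) (RatFunc ℂ) u / algebraMap (Polynomial ℂ) (RatFunc ℂ) (X ^ m) :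
      RatFunc ℂ) : LaurentSeries ℂ).coeff (-1) = u.coeff (m - 1) := by
  have hXm : ((algebraMap (Polynomial ℂ) (RatFunc ℂ) (X ^ m) : RatFunc ℂ) : LaurentSeries ℂ)
      = HahnSeries.single (m : ℤ) 1 := by
    rw [map_pow, RatFunc.algebraMap_X, map_pow, RatFunc.coe_X]
    rw [HahnSeries.single_pow]
    simp
  have hne : (HahnSeries.single (m : ℤ) (1 : ℂ)) ≠ 0 := HahnSeries.single_ne_zero one_ne_zero
  have key : ((algebraMap (Polynomial ℂ) (RatFunc ℂ) u / algebraMap (Polynomial ℂ) (RatFunc ℂ)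
      (X ^ m) : RatFunc ℂ) : LaurentSeries ℂ)
      = ((u : PowerSeries ℂ) : LaurentSeries ℂ) * HahnSeries.single (-(m : ℤ)) 1 := by
    rw [map_div₀, coe_poly_eq, hXm, div_eq_iff hne, mul_assoc,
      HahnSeries.single_mul_single, neg_add_cancel, one_mul]
    simp
  rw [key]
  have : (-1 : ℤ) = ((m : ℤ) - 1) + (-(m : ℤ)) := by ring
  rw [this, HahnSeries.coeff_mul_single_add, mul_one]
  have h2 : ((m : ℤ) - 1) = ((m - 1 : ℕ) : ℤ) := by omega
  rw [h2, PowerSeries.coeff_coe, if_neg (by omega), Polynomial.coeff_coe]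
  simp


lemma taylor_coeff_of_degree_le (c : ℂ) (r : Polynomial ℂ) (k : ℕ) (h : r.degree ≤ k) :
    (taylor c r).coeff k = r.coeff k := by
  by_cases hr : r = 0
  · simp [hr]
  rcases lt_or_eq_of_le h with h' | h'
  · have hn : r.natDegree < k := natDegree_lt_iff_degree_lt hr |>.mpr h'
    rw [coeff_eq_zero_of_natDegree_lt hn,
      coeff_eq_zero_of_natDegree_lt (by rwa [natDegree_taylor])]
  · have hnd : r.natDegree = k := natDegree_eq_of_degree_eq_some h'
    have hnd' : (taylor c r).natDegree = k := by rw [natDegree_taylor, hnd]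
    rw [← hnd', coeff_natDegree, hnd', ← hnd, coeff_natDegree, taylor_apply,
      leadingCoeff_comp (by simp)]
    simp

lemma coeff_mul_monic (r h : Polynomial ℂ) (hh : h.Monic) (k : ℕ) (hr : r.degree ≤ k) :
    (r * h).coeff (k + h.natDegree) = r.coeff k := by
  set d := h.natDegree with hd
  by_cases hX : h = X ^ d
  · rw [hX, coeff_mul_X_pow]
  have hsub : (h - X ^ d).degree < (d : WithBot ℕ) := by
    have := degree_sub_lt (p := h) (q := X ^ d)
      (by rw [degree_X_pow, (degree_eq_natDegree hh.ne_zero)]) hh.ne_zero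
      (by simp [hh.leadingCoeff, leadingCoeff_X_pow])
    rwa [(degree_eq_natDegree hh.ne_zero)] at this
  have hsplit : r * h = r * (h - X ^ d) + r * X ^ d := by ring
  rw [hsplit, coeff_add, coeff_mul_X_pow]
  have hz : (r * (h - X ^ d)).coeff (k + d) = 0 := by
    apply coeff_eq_zero_of_degree_lt
    calc (r * (h - X ^ d)).degree ≤ r.degree + (h - X ^ d).degree := degree_mul_le _ _
    _ < ((k + d : ℕ) : WithBot ℕ) := by
        push_cast
        rcases eq_or_ne r 0 with hr0 | hr0
        · simp [hr0]
        exact WithBot.add_lt_add_of_le_of_lt (by simpa using hr0) hr hsub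
  rw [hz, zero_add]

lemma res_sum {ι : Type*} (a : ℂ) (s : Finset ι) (F : ι → RatFunc ℂ) :
    res a (∑ b ∈ s, F b) = ∑ b ∈ s, res a (F b) := by
  classical
  induction s using Finset.induction_on with
  | empty => simp [res, laurentExpansion]
  | insert x s hx ih =>
      rw [Finset.sum_insert hx, Finset.sum_insert hx, ← ih]
      simp only [res, laurentExpansion, map_add, HahnSeries.coeff_add]

lemma res_single (a b : ℂ) (m : ℕ) (hm : 1 ≤ m) (r : Polynomial ℂ) (hr : r.degree < m) :
    res a (algebraMap (Polynomial ℂ) (RatFunc ℂ) r /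
      algebraMap (Polynomial ℂ) (RatFunc ℂ) ((X - C b) ^ m)) =
    if a = b then r.coeff (m - 1) else 0 := by
  have hlaur : RatFunc.laurent a (algebraMap (Polynomial ℂ) (RatFunc ℂ) r /
      algebraMap (Polynomial ℂ) (RatFunc ℂ) ((X - C b) ^ m)) =
      algebraMap (Polynomial ℂ) (RatFunc ℂ) (taylor a r) /
      algebraMap (Polynomial ℂ) (RatFunc ℂ) ((X - C (b - a)) ^ m) := by
    rw [RatFunc.laurent_div]
    congr 1
    congr 1
    have : taylor a ((X - C b) ^ m) = (taylor a (X - C b)) ^ m := by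
      show (taylorAlgHom a) ((X - C b) ^ m) = ((taylorAlgHom a) (X - C b)) ^ m
      exact map_pow _ _ _
    rw [this, map_sub, taylor_X, taylor_C]
    congr 1
    rw [C_sub]; ring
  unfold res laurentExpansion
  rw [hlaur]
  by_cases hab : a = b
  · subst hab
    rw [if_pos rfl, sub_self, map_zero, sub_zero]
    rw [coeff_neg_one_div_X_pow _ m hm]
    apply taylor_coeff_of_degree_le a r (m - 1)
    by_cases hr0 : r = 0
    · simp [hr0]
    have : r.natDegree < m := natDegree_lt_iff_degree_lt hr0 |>.mpr hr
    rw [degree_eq_natDegree hr0]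
    exact_mod_cast Nat.le_sub_one_of_lt this
  · rw [if_neg hab]
    apply coeff_neg_one_of_unit_denom
    have : ((X - C (b - a)) ^ m).coeff 0 = (a - b) ^ m := by
      rw [coeff_zero_eq_eval_zero]
      simp [eval_pow, eval_sub, eval_X, eval_C, zero_sub, neg_sub]
    rw [this]
    exact pow_ne_zero _ (sub_ne_zero.mpr hab)



/-- If `f = p/q` with `deg p + 2 ≤ deg q` (so the `1`-form `f dz` is regular at infinity),
then the finitely supported sum of the residues of `f` over all points of `ℂ` vanishes. -/
theorem sum_residues_eq_zero_of_degree_le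
    (p q : Polynomial ℂ) (hq : q ≠ 0) (hdeg : p.degree + 2 ≤ q.degree) :
    ∑ᶠ a : ℂ, res a (algebraMap (Polynomial ℂ) (RatFunc ℂ) p /
      algebraMap (Polynomial ℂ) (RatFunc ℂ) q) = 0 := by
  classical
  set K := RatFunc ℂ
  set A := algebraMap (Polynomial ℂ) K with hA
  by_cases hp : p = 0
  · simp [hp, res, laurentExpansion]
  -- normalize to monic denominator
  set c := q.leadingCoeff with hc
  have hc0 : c ≠ 0 := leadingCoeff_ne_zero.mpr hq
  set p₁ := p * C c⁻¹ with hp₁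
  set q₁ := q * C c⁻¹ with hq₁def
  have hcinv : (C c⁻¹ : Polynomial ℂ) ≠ 0 := by simpa using inv_ne_zero hc0
  have hq₁0 : q₁ ≠ 0 := mul_ne_zero hq hcinv
  have hp₁0 : p₁ ≠ 0 := mul_ne_zero hp hcinv
  have hmonic : q₁.Monic := monic_mul_leadingCoeff_inv hq
  have hdq : q₁.degree = q.degree := degree_mul_C (inv_ne_zero hc0)
  have hdp : p₁.degree = p.degree := degree_mul_C (inv_ne_zero hc0)
  have hfeq : A p / A q = A p₁ / A q₁ := by
    rw [hp₁, hq₁def, map_mul, map_mul, mul_div_mul_right]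
    simpa [hA, FaithfulSMul.algebraMap_eq_zero_iff] using hcinv
  rw [hfeq]
  set n := q₁.natDegree with hn
  have hdegn : q₁.degree = (n : WithBot ℕ) := degree_eq_natDegree hq₁0
  have hpn : p.natDegree + 2 ≤ n := by
    have : (↑(p.natDegree + 2) : WithBot ℕ) ≤ (n : WithBot ℕ) := by
      push_cast
      rw [← degree_eq_natDegree hp, ← hdegn, hdq]
      exact hdeg
    exact_mod_cast this
  have hn2 : 2 ≤ n := le_trans (by omega) hpn
  set s := q₁.roots.toFinset with hs
  set m : ℂ → ℕ := fun b => q₁.rootMultiplicity b with hm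
  set g : ℂ → Polynomial ℂ := fun b => (X - C b) ^ m b with hg
  have hfact : q₁ = ∏ b ∈ s, g b := by
    conv_lhs => rw [(IsAlgClosed.splits _).eq_prod_roots_of_monic hmonic]
    rw [Finset.prod_multiset_map_count]
    exact Finset.prod_congr rfl fun b _ => by rw [count_roots]
  have hgmonic : ∀ b ∈ s, (g b).Monic := fun b _ => (monic_X_sub_C b).pow _
  have hgne : ∀ b, g b ≠ 0 := fun b => ((monic_X_sub_C b).pow _).ne_zero
  have hcop : Set.Pairwise ↑s fun i j => IsCoprime (g i) (g j) := by
    intro i _ j _ hij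
    exact (pairwise_coprime_X_sub_C (Function.injective_id) hij).pow
  obtain ⟨quo, r, hrdeg, hsum⟩ := div_eq_quo_add_sum_rem_div K p₁ hgmonic hcop
  have hprodK : ∏ i ∈ s, (algebraMap (Polynomial ℂ) K) (g i) = A q₁ := by
    rw [← map_prod, ← hfact]
  have hsum' : A p₁ / A q₁ = A quo + ∑ i ∈ s, A (r i) / A (g i) := by
    rw [← hprodK]; exact hsum
  -- degree facts
  have hmb : ∀ b ∈ s, 1 ≤ m b := by
    intro b hb
    have hb' : b ∈ q₁.roots := Multiset.mem_toFinset.mp hb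
    have := (mem_roots hq₁0).mp hb'
    exact (rootMultiplicity_pos hq₁0).mpr this
  set h : ℂ → Polynomial ℂ := fun b => ∏ c ∈ s.erase b, g c with hh
  have hhmonic : ∀ b, (h b).Monic := fun b =>
    monic_prod_of_monic _ _ fun i hi => hgmonic i (Finset.mem_of_mem_erase hi)
  have hq₁split : ∀ b ∈ s, g b * h b = q₁ := by
    intro b hb
    rw [hh, Finset.mul_prod_erase _ _ hb, ← hfact]
  have hgdeg : ∀ b, (g b).natDegree = m b := by
    intro b; rw [hg]; simp [natDegree_pow]
  have hhdeg : ∀ b ∈ s, m b + (h b).natDegree = n := by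
    intro b hb
    rw [hn, ← hq₁split b hb, natDegree_mul (hgne b) (hhmonic b).ne_zero, hgdeg]
  have hrdeg' : ∀ b ∈ s, (r b).degree < (m b : WithBot ℕ) := by
    intro b hb
    have := hrdeg b hb
    rwa [hg, degree_pow, degree_X_sub_C, nsmul_eq_mul, mul_one] at this
  -- polynomial identity
  have hq₁K : A q₁ ≠ 0 := by simpa [hA, FaithfulSMul.algebraMap_eq_zero_iff] using hq₁0
  have hgK : ∀ b, A (g b) ≠ 0 := fun b => by
    simpa [hA, FaithfulSMul.algebraMap_eq_zero_iff] using hgne b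
  have hE : p₁ = quo * q₁ + ∑ b ∈ s, r b * h b := by
    apply IsFractionRing.injective (Polynomial ℂ) K
    have h1 : A p₁ = (A quo + ∑ b ∈ s, A (r b) / A (g b)) * A q₁ := by
      rw [← hsum', div_mul_cancel₀ _ hq₁K]
    rw [add_mul, Finset.sum_mul] at h1
    have h2 : ∀ b ∈ s, A (r b) / A (g b) * A q₁ = A (r b) * A (h b) := by
      intro b hb
      rw [← hq₁split b hb, map_mul, ← mul_assoc, div_mul_cancel₀ _ (hgK b)]
    rw [Finset.sum_congr rfl h2] at h1
    calc A p₁ = A quo * A q₁ + ∑ x ∈ s, A (r x) * A (h x) := h1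
      _ = A (quo * q₁ + ∑ b ∈ s, r b * h b) := by
          simp only [map_add, map_mul, map_sum]
  have hp₁degn : p₁.degree < ((n - 1 : ℕ) : WithBot ℕ) := by
    rw [hdp, degree_eq_natDegree hp]
    exact_mod_cast by omega
  have hsumdeg : (∑ b ∈ s, r b * h b).degree < (n : WithBot ℕ) := by
    apply lt_of_le_of_lt (degree_sum_le _ _)
    rw [Finset.sup_lt_iff (by exact_mod_cast WithBot.bot_lt_coe n)]
    intro b hb
    apply lt_of_le_of_lt (degree_mul_le _ _)
    have h1 : (h b).degree = ((h b).natDegree : WithBot ℕ) :=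
      degree_eq_natDegree (hhmonic b).ne_zero
    calc (r b).degree + (h b).degree
        < (m b : WithBot ℕ) + (h b).natDegree := by
          rw [h1]
          exact WithBot.add_lt_add_of_lt_of_le (by simp) (hrdeg' b hb) le_rfl
      _ = (n : WithBot ℕ) := by
          rw [← Nat.cast_add, hhdeg b hb]
  have hquo : quo = 0 := by
    by_contra h0
    have hql : ((n : WithBot ℕ)) ≤ (quo * q₁).degree := by
      rw [degree_mul, hdegn]
      have : (0 : WithBot ℕ) ≤ quo.degree := zero_le_degree_iff.mpr h0
      calc (n : WithBot ℕ) = 0 + n := by rw [zero_add]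
        _ ≤ quo.degree + n := by exact add_le_add_left this _
    have hlt : p₁.degree < (n : WithBot ℕ) :=
      lt_of_lt_of_le hp₁degn (by exact_mod_cast by omega)
    rw [hE, degree_add_eq_left_of_degree_lt (lt_of_lt_of_le hsumdeg hql)] at hlt
    exact absurd (lt_of_le_of_lt hql hlt) (lt_irrefl _)
  rw [hquo, zero_mul, zero_add] at hE
  rw [hquo, map_zero, zero_add] at hsum'
  -- residue computation
  have hresval : ∀ a : ℂ, res a (A p₁ / A q₁)
      = if a ∈ s then (r a).coeff (m a - 1) else 0 := by
    intro a
    rw [hsum', res_sum]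
    have : ∀ b ∈ s, res a (A (r b) / A (g b))
        = if a = b then (r b).coeff (m b - 1) else 0 := by
      intro b hb
      exact res_single a b (m b) (hmb b hb) (r b) (hrdeg' b hb)
    rw [Finset.sum_congr rfl this, Finset.sum_ite_eq]
  have hsupp : Function.support (fun a => res a (A p₁ / A q₁)) ⊆ (s : Set ℂ) := by
    intro a ha
    by_contra hns
    exact ha (show res a (A p₁ / A q₁) = 0 by rw [hresval a, if_neg (fun hmem => hns (Finset.mem_coe.mpr hmem))])
  rw [finsum_eq_sum_of_support_subset _ hsupp]
  have hstep : ∀ a ∈ s, res a (A p₁ / A q₁) = (r a * h a).coeff (n - 1) := by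
    intro a ha
    rw [hresval a, if_pos ha]
    have hidx : (m a - 1) + (h a).natDegree = n - 1 := by
      have := hhdeg a ha
      have := hmb a ha
      omega
    rw [← hidx, coeff_mul_monic (r a) (h a) (hhmonic a) (m a - 1)]
    have hb0 : (r a).degree < ((m a : ℕ) : WithBot ℕ) := hrdeg' a ha
    by_cases hr0 : r a = 0
    · simp [hr0]
    rw [degree_eq_natDegree hr0]
    have : (r a).natDegree < m a := natDegree_lt_iff_degree_lt hr0 |>.mpr hb0
    exact_mod_cast Nat.le_sub_one_of_lt this
  rw [Finset.sum_congr rfl hstep, ← finset_sum_coeff, ← hE]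
  exact coeff_eq_zero_of_degree_lt hp₁degn

end
end
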